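/- arXiv:2003.04031 — 5 statements merged into one kernel-verified Lean document; each statement's English description precedes it below -/
import Mathlib

section
/- Let R be η-averaged with η ∈ (0,1), θ ∈ (0, (1−η)/η), and set μ = η(1+θ). Then the composition R_θ := R ∘ ((1+θ)R − θ·Id) is ν-averaged with ν = (η + μ − 2ημ)/(1 − ημ), and ν ∈ (0,1). -/
open scoped RealInnerProductSpace

/-- `Q` is nonexpansive. -/
def Nonexpansive {H : Type*} [NormedAddCommGroup H] (Q : H → H) : Prop :=
  ∀ x y, ‖Q x - Q y‖ ≤ ‖x - y‖

/-- `R` is `α`-averaged: `R = (1-α)•Id + α•Q` for some nonexpansive `Q`. -/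
def IsAveraged {H : Type*} [NormedAddCommGroup H] [InnerProductSpace ℝ H]
    (α : ℝ) (R : H → H) : Prop :=
  ∃ Q : H → H, Nonexpansive Q ∧ ∀ x, R x = (1 - α) • x + α • Q x

/-!
An `α`-averaged map `T` is characterised by
`‖T x - T y‖² + ((1 - α) / α) ‖(x - T x) - (y - T y)‖² ≤ ‖x - y‖²`.
Chaining this inequality for `T₂` and then `T₁`, and using
`s₁ s₂ ‖a + b‖² ≤ (s₁ + s₂) (s₁ ‖a‖² + s₂ ‖b‖²)`, gives it for `T₁ ∘ T₂` with coefficient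
`s₁ s₂ / (s₁ + s₂)`; in terms of averagedness constants this says `ν / (1 - ν) = α₁ / (1 - α₁) + α₂ / (1 - α₂)`,
which is the composition rule. The overrelaxation `(1 + θ) R - θ Id` of `R = (1 - η) Id + η Q`
is `(1 - μ) Id + μ Q` with `μ = η (1 + θ)`, and `θ < (1 - η) / η` is exactly `μ < 1`.
-/

open Set

section

variable {H : Type*} [NormedAddCommGroup H] [InnerProductSpace ℝ H]

theorem norm_sub_one_sub_smul_sq_sub_sq (α : ℝ) (u w : H) :
    ‖w - (1 - α) • u‖ ^ 2 - (α * ‖u‖) ^ 2 = α * (‖w‖ ^ 2 - ‖u‖ ^ 2) + (1 - α) * ‖u - w‖ ^ 2 := by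
  rw [norm_sub_sq_real, norm_sub_sq_real, norm_smul, inner_smul_right, real_inner_comm,
    Real.norm_eq_abs, mul_pow, sq_abs]
  ring

theorem isAveraged_iff_norm_sub_le {α : ℝ} {T : H → H} (hα : 0 < α) :
    IsAveraged α T ↔ ∀ x y, ‖T x - T y - (1 - α) • (x - y)‖ ≤ α * ‖x - y‖ := by
  constructor
  · rintro ⟨Q, hQ, hT⟩ x y
    have hdiff : T x - T y - (1 - α) • (x - y) = α • (Q x - Q y) := by
      rw [hT x, hT y]; module
    rw [hdiff, norm_smul, Real.norm_of_nonneg hα.le]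
    exact mul_le_mul_of_nonneg_left (hQ x y) hα.le
  · intro h
    refine ⟨fun x => α⁻¹ • (T x - (1 - α) • x), fun x y => ?_, fun x => ?_⟩
    · have hdiff : α⁻¹ • (T x - (1 - α) • x) - α⁻¹ • (T y - (1 - α) • y)
          = α⁻¹ • (T x - T y - (1 - α) • (x - y)) := by module
      rw [hdiff, norm_smul, Real.norm_of_nonneg (inv_nonneg.2 hα.le), inv_mul_le_iff₀ hα]
      exact h x y
    · rw [smul_smul, mul_inv_cancel₀ hα.ne', one_smul]
      abel

theorem isAveraged_iff_norm_sq_le {α : ℝ} {T : H → H} (hα : 0 < α) :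
    IsAveraged α T ↔
      ∀ x y, ‖T x - T y‖ ^ 2 + (1 - α) / α * ‖x - y - (T x - T y)‖ ^ 2 ≤ ‖x - y‖ ^ 2 := by
  rw [isAveraged_iff_norm_sub_le hα]
  refine forall₂_congr fun x y => ?_
  rw [← sq_le_sq₀ (norm_nonneg _) (by positivity), ← sub_nonpos,
    norm_sub_one_sub_smul_sq_sub_sq]
  have hscale : α * (‖T x - T y‖ ^ 2 - ‖x - y‖ ^ 2) + (1 - α) * ‖x - y - (T x - T y)‖ ^ 2
      = α * (‖T x - T y‖ ^ 2 + (1 - α) / α * ‖x - y - (T x - T y)‖ ^ 2 - ‖x - y‖ ^ 2) := by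
    field_simp
    ring
  rw [hscale, ← mul_zero α, mul_le_mul_iff_right₀ hα, sub_nonpos]

theorem mul_mul_norm_add_sq_le (s₁ s₂ : ℝ) (a b : H) :
    s₁ * s₂ * ‖a + b‖ ^ 2 ≤ (s₁ + s₂) * (s₁ * ‖a‖ ^ 2 + s₂ * ‖b‖ ^ 2) := by
  have hexp := norm_sub_sq_real (s₁ • a) (s₂ • b)
  rw [norm_smul, norm_smul, real_inner_smul_left, real_inner_smul_right, Real.norm_eq_abs,
    Real.norm_eq_abs, mul_pow, mul_pow, sq_abs, sq_abs] at hexp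
  rw [norm_add_sq_real]
  linear_combination hexp + sq_nonneg ‖s₁ • a - s₂ • b‖

theorem norm_sq_add_mul_norm_sub_sq_le_comp {T₁ T₂ : H → H} {s₁ s₂ : ℝ} (hs : 0 < s₁ + s₂)
    (h₁ : ∀ x y, ‖T₁ x - T₁ y‖ ^ 2 + s₁ * ‖x - y - (T₁ x - T₁ y)‖ ^ 2 ≤ ‖x - y‖ ^ 2)
    (h₂ : ∀ x y, ‖T₂ x - T₂ y‖ ^ 2 + s₂ * ‖x - y - (T₂ x - T₂ y)‖ ^ 2 ≤ ‖x - y‖ ^ 2) (x y : H) :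
    ‖T₁ (T₂ x) - T₁ (T₂ y)‖ ^ 2 +
        s₁ * s₂ / (s₁ + s₂) * ‖x - y - (T₁ (T₂ x) - T₁ (T₂ y))‖ ^ 2 ≤ ‖x - y‖ ^ 2 := by
  set u := x - y
  set v := T₂ x - T₂ y
  set w := T₁ (T₂ x) - T₁ (T₂ y)
  have hsplit : u - w = (v - w) + (u - v) := by abel
  have hweighted : s₁ * s₂ / (s₁ + s₂) * ‖u - w‖ ^ 2 ≤ s₁ * ‖v - w‖ ^ 2 + s₂ * ‖u - v‖ ^ 2 := by
    rw [div_mul_eq_mul_div, div_le_iff₀' hs, hsplit]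
    exact mul_mul_norm_add_sq_le s₁ s₂ (v - w) (u - v)
  linarith [h₁ (T₂ x) (T₂ y), h₂ x y]

theorem IsAveraged.comp {α₁ α₂ : ℝ} {T₁ T₂ : H → H} (hα₁ : α₁ ∈ Ioo (0 : ℝ) 1)
    (hα₂ : α₂ ∈ Ioo (0 : ℝ) 1) (hT₁ : IsAveraged α₁ T₁) (hT₂ : IsAveraged α₂ T₂) :
    IsAveraged ((α₁ + α₂ - 2 * α₁ * α₂) / (1 - α₁ * α₂)) (T₁ ∘ T₂) := by
  obtain ⟨hα₁0, hα₁1⟩ := hα₁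
  obtain ⟨hα₂0, hα₂1⟩ := hα₂
  rw [isAveraged_iff_norm_sq_le hα₁0] at hT₁
  rw [isAveraged_iff_norm_sq_le hα₂0] at hT₂
  have hden : 0 < 1 - α₁ * α₂ := by nlinarith
  have hnum : 0 < α₁ + α₂ - 2 * α₁ * α₂ := by nlinarith
  have hsum : (1 - α₁) / α₁ + (1 - α₂) / α₂ = (α₁ + α₂ - 2 * α₁ * α₂) / (α₁ * α₂) := by
    field_simp
    ring
  have hharm : (1 - (α₁ + α₂ - 2 * α₁ * α₂) / (1 - α₁ * α₂)) /
      ((α₁ + α₂ - 2 * α₁ * α₂) / (1 - α₁ * α₂)) =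
        (1 - α₁) / α₁ * ((1 - α₂) / α₂) / ((1 - α₁) / α₁ + (1 - α₂) / α₂) := by
    rw [hsum]
    field_simp
    ring
  rw [isAveraged_iff_norm_sq_le (div_pos hnum hden), hharm]
  exact fun x y => norm_sq_add_mul_norm_sub_sq_le_comp (by positivity) hT₁ hT₂ x y

theorem IsAveraged.overrelax {η θ : ℝ} {R : H → H} (hR : IsAveraged η R) :
    IsAveraged (η * (1 + θ)) (fun x => (1 + θ) • R x - θ • x) := by
  obtain ⟨Q, hQ, hRQ⟩ := hR
  exact ⟨Q, hQ, fun x => by simp only [hRQ x]; module⟩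

end

theorem add_sub_two_mul_div_one_sub_mul_mem_Ioo {α₁ α₂ : ℝ} (hα₁ : α₁ ∈ Ioo (0 : ℝ) 1)
    (hα₂ : α₂ ∈ Ioo (0 : ℝ) 1) : (α₁ + α₂ - 2 * α₁ * α₂) / (1 - α₁ * α₂) ∈ Ioo (0 : ℝ) 1 := by
  obtain ⟨hα₁0, hα₁1⟩ := hα₁
  obtain ⟨hα₂0, hα₂1⟩ := hα₂
  have hden : 0 < 1 - α₁ * α₂ := by nlinarith
  exact ⟨div_pos (by nlinarith) hden, (div_lt_one hden).2 (by nlinarith)⟩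

/-- Let `R` be `η`-averaged, `θ ∈ (0,(1−η)/η)`, `μ = η(1+θ)`. Then
`R_θ = R ∘ ((1+θ)R − θ·Id)` is `ν`-averaged with `ν = (η+μ−2ημ)/(1−ημ) ∈ (0,1)`. -/
theorem averaged_composition_overrelaxation
    {H : Type*} [NormedAddCommGroup H] [InnerProductSpace ℝ H]
    (R : H → H) (η θ : ℝ) (hη : η ∈ Set.Ioo (0 : ℝ) 1)
    (hθ : θ ∈ Set.Ioo (0 : ℝ) ((1 - η) / η))
    (hR : IsAveraged η R) (μ ν : ℝ) (hμ : μ = η * (1 + θ))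
    (hν : ν = (η + μ - 2 * η * μ) / (1 - η * μ)) :
    ν ∈ Set.Ioo (0 : ℝ) 1 ∧
      IsAveraged ν (fun x => R ((1 + θ) • R x - θ • x)) := by
  have hμIoo : μ ∈ Ioo (0 : ℝ) 1 := by
    obtain ⟨hη0, hη1⟩ := hη
    obtain ⟨hθ0, hθ1⟩ := hθ
    rw [lt_div_iff₀ hη0] at hθ1
    exact ⟨hμ ▸ by positivity, hμ ▸ by linarith⟩
  subst hμ hν
  exact ⟨add_sub_two_mul_div_one_sub_mul_mem_Ioo hη hμIoo, hR.comp hη hμIoo hR.overrelax⟩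
end

section
/- Let R be η-averaged with η ∈ (0,1), fix(R) ≠ ∅, and θ ∈ (0, (1−η)/η). Then the even subsequence (ω^{2k}) of the alternating inertial iteration ω^{2k+1} = R(ω^{2k}), ω^{2k+2} = R((1+θ)ω^{2k+1} − θ ω^{2k}) converges (strongly in finite dimension, weakly in general) to a fixed point of R. -/
open scoped RealInnerProductSpace
open Filter

/-!
Put `S = (1 + θ) R - θ Id`, so that `x_k = ω^{2k}` satisfies `x_{k+1} = R (S x_k)`. If
`R = (1 - η) Id + η Q` with `Q` nonexpansive, then `S = (1 - α) Id + α Q` with `α = η (1 + θ)`,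
and the bound on `θ` says exactly `α < 1`. An `α`-averaged map `T` satisfies
`‖T x - p‖² + (1 - α) / α ‖T x - x‖² ≤ ‖x - p‖²` at every fixed point `p`; an inequality of this
form passes to `R ∘ S`, whose fixed points are those of `R`. It makes the iterates Fejér monotone
with respect to the fixed points and sends the residuals `‖T x_k - x_k‖` to zero, so in finite
dimension a cluster point exists, is a fixed point, and is the limit of the whole sequence.
-/

open Function Topology

section Metric

variable {X : Type*} [MetricSpace X]

theorem isFixedPt_of_tendsto_dist_self {T : X → X} (hT : Continuous T) {x : ℕ → X} {q : X}
    (hx : Tendsto x atTop (𝓝 q)) (hres : Tendsto (fun k => dist (T (x k)) (x k)) atTop (𝓝 0)) :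
    IsFixedPt T q := by
  have hlim : Tendsto (fun k => dist (T (x k)) (x k)) atTop (𝓝 (dist (T q) q)) :=
    ((hT.tendsto q).comp hx).dist hx
  exact dist_eq_zero.mp (tendsto_nhds_unique hlim hres)

theorem exists_tendsto_of_antitone_dist [ProperSpace X] {F : Set X} (hF : F.Nonempty)
    {x : ℕ → X} (hfejer : ∀ q ∈ F, Antitone fun k => dist (x k) q)
    (hcluster : ∀ q (φ : ℕ → ℕ), StrictMono φ → Tendsto (x ∘ φ) atTop (𝓝 q) → q ∈ F) :
    ∃ q ∈ F, Tendsto x atTop (𝓝 q) := by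
  obtain ⟨p, hp⟩ := hF
  have hbounded : ∀ k, x k ∈ Metric.closedBall p (dist (x 0) p) :=
    fun k => hfejer p hp (Nat.zero_le k)
  obtain ⟨q, -, φ, hφ, hxφ⟩ := (isCompact_closedBall p _).tendsto_subseq hbounded
  have hq := hcluster q φ hφ hxφ
  have hlim := tendsto_atTop_ciInf (hfejer q hq) ⟨0, by rintro _ ⟨k, rfl⟩; exact dist_nonneg⟩
  have hinf : ⨅ k, dist (x k) q = 0 :=
    tendsto_nhds_unique (hlim.comp hφ.tendsto_atTop) (tendsto_iff_dist_tendsto_zero.mp hxφ)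
  rw [hinf] at hlim
  exact ⟨q, hq, tendsto_iff_dist_tendsto_zero.mpr hlim⟩

end Metric

theorem tendsto_zero_of_add_mul_le {a b : ℕ → ℝ} {c : ℝ} (hc : 0 < c) (ha : ∀ k, 0 ≤ a k)
    (hb : ∀ k, 0 ≤ b k) (h : ∀ k, a (k + 1) + c * b k ≤ a k) : Tendsto b atTop (𝓝 0) := by
  have hanti : Antitone a :=
    antitone_nat_of_succ_le fun k => by linarith [h k, mul_nonneg hc.le (hb k)]
  obtain ⟨L, hL⟩ : ∃ L, Tendsto a atTop (𝓝 L) :=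
    ⟨_, tendsto_atTop_ciInf hanti ⟨0, by rintro _ ⟨k, rfl⟩; exact ha k⟩⟩
  have hdiff : Tendsto (fun k => (a k - a (k + 1)) / c) atTop (𝓝 0) := by
    simpa using (hL.sub (hL.comp (tendsto_add_atTop_nat 1))).div_const c
  refine squeeze_zero hb (fun k => ?_) hdiff
  rw [le_div_iff₀ hc]
  linarith [h k]

section Normed

variable {E : Type*} [NormedAddCommGroup E]

theorem Nonexpansive.lipschitzWith {Q : E → E} (hQ : Nonexpansive Q) : LipschitzWith 1 Q :=
  LipschitzWith.of_dist_le_mul fun x y => by simpa [dist_eq_norm] using hQ x y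

def StronglyQuasiNonexpansive (c : ℝ) (T : E → E) : Prop :=
  ∀ x p, IsFixedPt T p → ‖T x - p‖ ^ 2 + c * ‖T x - x‖ ^ 2 ≤ ‖x - p‖ ^ 2

namespace StronglyQuasiNonexpansive

variable {c d : ℝ} {R S T : E → E}

theorem norm_sub_le (hT : StronglyQuasiNonexpansive c T) (hc : 0 ≤ c) {p : E}
    (hp : IsFixedPt T p) (x : E) : ‖T x - p‖ ≤ ‖x - p‖ := by
  have h := hT x p hp
  refine (pow_le_pow_iff_left₀ (norm_nonneg _) (norm_nonneg _) two_ne_zero).mp ?_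
  nlinarith [mul_nonneg hc (sq_nonneg ‖T x - x‖)]

theorem isFixedPt_of_comp (hR : StronglyQuasiNonexpansive c R)
    (hS : StronglyQuasiNonexpansive d S) (hc : 0 ≤ c) (hd : 0 < d) {p : E}
    (hpR : IsFixedPt R p) (hpS : IsFixedPt S p) {q : E} (hq : IsFixedPt (R ∘ S) q) :
    IsFixedPt S q ∧ IsFixedPt R q := by
  have hRq : R (S q) = q := hq
  have h₁ := hR (S q) p hpR
  have h₂ := hS q p hpS
  rw [hRq, ← norm_neg (q - S q), neg_sub] at h₁
  have hd_mul : d * ‖S q - q‖ ^ 2 ≤ d * 0 := by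
    linarith [mul_nonneg hc (sq_nonneg ‖S q - q‖)]
  have hSq : ‖S q - q‖ ^ 2 = 0 := le_antisymm (le_of_mul_le_mul_left hd_mul hd) (sq_nonneg _)
  have hSq : S q = q := by simpa [sub_eq_zero] using hSq
  exact ⟨hSq, show R q = q by simpa [hSq] using hRq⟩

/-- The common fixed point is what rules out fixed points of `R ∘ S` that `R` and `S` do not
share. -/
theorem comp (hR : StronglyQuasiNonexpansive c R) (hS : StronglyQuasiNonexpansive d S)
    (hc : 0 ≤ c) (hd : 0 < d) (hcommon : ∃ p, IsFixedPt R p ∧ IsFixedPt S p) :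
    StronglyQuasiNonexpansive (min c d / 2) (R ∘ S) := by
  obtain ⟨p₀, hp₀R, hp₀S⟩ := hcommon
  intro x p hp
  obtain ⟨hpS, hpR⟩ := isFixedPt_of_comp hR hS hc hd hp₀R hp₀S hp
  have h₁ := hR (S x) p hpR
  have h₂ := hS x p hpS
  have hsplit : ‖R (S x) - x‖ ^ 2 ≤ 2 * (‖R (S x) - S x‖ ^ 2 + ‖S x - x‖ ^ 2) := by
    calc ‖R (S x) - x‖ ^ 2 ≤ (‖R (S x) - S x‖ + ‖S x - x‖) ^ 2 := by
          gcongr; exact norm_sub_le_norm_sub_add_norm_sub _ _ _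
      _ ≤ 2 * (‖R (S x) - S x‖ ^ 2 + ‖S x - x‖ ^ 2) := add_sq_le
  have hmin : 0 ≤ min c d := le_min hc hd.le
  simp only [comp_apply]
  nlinarith [min_le_left c d, min_le_right c d, sq_nonneg ‖R (S x) - S x‖,
    sq_nonneg ‖S x - x‖, mul_le_mul_of_nonneg_left hsplit hmin]

theorem exists_tendsto_isFixedPt [ProperSpace E] (hT : StronglyQuasiNonexpansive c T)
    (hc : 0 < c) (hcont : Continuous T) (hfix : (fixedPoints T).Nonempty) {x : ℕ → E}
    (hx : ∀ k, x (k + 1) = T (x k)) : ∃ p, IsFixedPt T p ∧ Tendsto x atTop (𝓝 p) := by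
  obtain ⟨p, hp⟩ := hfix
  have hres : Tendsto (fun k => dist (T (x k)) (x k)) atTop (𝓝 0) := by
    have hsq : Tendsto (fun k => ‖T (x k) - x k‖ ^ 2) atTop (𝓝 0) :=
      tendsto_zero_of_add_mul_le hc (fun _ => sq_nonneg _) (fun _ => sq_nonneg _)
        (a := fun k => ‖x k - p‖ ^ 2) fun k => by simp only [hx]; exact hT (x k) p hp
    simpa [dist_eq_norm] using hsq.sqrt
  have hfejer : ∀ q ∈ fixedPoints T, Antitone fun k => dist (x k) q := fun q hq =>
    antitone_nat_of_succ_le fun k => by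
      simpa only [dist_eq_norm, hx] using hT.norm_sub_le hc.le hq (x k)
  obtain ⟨q, hq, hlim⟩ := exists_tendsto_of_antitone_dist ⟨p, hp⟩ hfejer
    fun q φ hφ hxφ => isFixedPt_of_tendsto_dist_self hcont hxφ (hres.comp hφ.tendsto_atTop)
  exact ⟨q, hq, hlim⟩

end StronglyQuasiNonexpansive

end Normed

section InnerProduct

variable {H : Type*} [NormedAddCommGroup H] [InnerProductSpace ℝ H]

theorem norm_one_sub_smul_add_smul_sq (a b : H) (t : ℝ) :
    ‖(1 - t) • a + t • b‖ ^ 2 =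
      (1 - t) * ‖a‖ ^ 2 + t * ‖b‖ ^ 2 - t * (1 - t) * ‖a - b‖ ^ 2 := by
  rw [norm_add_sq_real, norm_sub_sq_real, norm_smul, norm_smul, real_inner_smul_left,
    real_inner_smul_right, mul_pow, mul_pow, Real.norm_eq_abs, Real.norm_eq_abs, sq_abs, sq_abs]
  ring

namespace IsAveraged

variable {α : ℝ} {R : H → H}

theorem continuous (hR : IsAveraged α R) : Continuous R := by
  obtain ⟨Q, hQ, hRQ⟩ := hR
  have := hQ.lipschitzWith.continuous
  rw [funext hRQ]
  fun_prop

theorem stronglyQuasiNonexpansive (hR : IsAveraged α R) (hα : 0 < α) :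
    StronglyQuasiNonexpansive ((1 - α) / α) R := by
  obtain ⟨Q, hQ, hRQ⟩ := hR
  intro x p hp
  have hQp : Q p = p := by
    have h : α • (Q p - p) = R p - p := by rw [hRQ p]; module
    rw [hp.eq, sub_self, smul_eq_zero] at h
    exact sub_eq_zero.mp (h.resolve_left hα.ne')
  have hQx : ‖Q x - p‖ ^ 2 ≤ ‖x - p‖ ^ 2 := by
    have := hQ x p
    rw [hQp] at this
    gcongr
  have hdist : ‖R x - p‖ ^ 2 =
      (1 - α) * ‖x - p‖ ^ 2 + α * ‖Q x - p‖ ^ 2 - α * (1 - α) * ‖x - Q x‖ ^ 2 := by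
    rw [← sub_sub_sub_cancel_right x (Q x) p, ← norm_one_sub_smul_add_smul_sq, hRQ x]
    congr 2
    module
  have hres : ‖R x - x‖ ^ 2 = α ^ 2 * ‖x - Q x‖ ^ 2 := by
    rw [hRQ x, show (1 - α) • x + α • Q x - x = α • (Q x - x) by module, norm_smul, mul_pow,
      Real.norm_eq_abs, sq_abs, ← norm_neg, neg_sub]
  have hcoeff : (1 - α) / α * α ^ 2 = α * (1 - α) := by field_simp
  rw [hdist, hres, ← mul_assoc, hcoeff]
  nlinarith

theorem extrapolate (hR : IsAveraged α R) (θ : ℝ) :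
    IsAveraged (α * (1 + θ)) fun x => (1 + θ) • R x - θ • x := by
  obtain ⟨Q, hQ, hRQ⟩ := hR
  exact ⟨Q, hQ, fun x => by simp only [hRQ x]; module⟩

end IsAveraged

end InnerProduct

/-- For an `η`-averaged operator `R` with a fixed point, `θ ∈ (0,(1−η)/η)`, the even
subsequence of the alternating inertial iteration
`ω^{2k+1} = R(ω^{2k})`, `ω^{2k+2} = R((1+θ)ω^{2k+1} − θω^{2k})`
converges to a fixed point of `R`. -/
theorem alternating_inertia_convergence {n : ℕ}
    (R : EuclideanSpace ℝ (Fin n) → EuclideanSpace ℝ (Fin n))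
    (η θ : ℝ) (hη : η ∈ Set.Ioo (0 : ℝ) 1)
    (hθ : θ ∈ Set.Ioo (0 : ℝ) ((1 - η) / η))
    (hR : IsAveraged η R) (hfix : {ω | R ω = ω}.Nonempty)
    (ω : ℕ → EuclideanSpace ℝ (Fin n))
    (hodd : ∀ k, ω (2 * k + 1) = R (ω (2 * k)))
    (heven : ∀ k, ω (2 * k + 2) = R ((1 + θ) • ω (2 * k + 1) - θ • ω (2 * k))) :
    ∃ p, R p = p ∧ Tendsto (fun k => ω (2 * k)) atTop (nhds p) := by
  obtain ⟨hη₀, hη₁⟩ := hη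
  obtain ⟨hθ₀, hθ₁⟩ := hθ
  obtain ⟨p, hp : IsFixedPt R p⟩ := hfix
  set S := fun x => (1 + θ) • R x - θ • x
  have hS : IsAveraged (η * (1 + θ)) S := hR.extrapolate θ
  have hα₀ : 0 < η * (1 + θ) := by positivity
  have hα₁ : η * (1 + θ) < 1 := by rw [lt_div_iff₀ hη₀] at hθ₁; linarith
  have hpS : IsFixedPt S p := by simp only [S, IsFixedPt, hp.eq]; module
  have hR' := hR.stronglyQuasiNonexpansive hη₀
  have hS' := hS.stronglyQuasiNonexpansive hα₀
  have hcR : 0 < (1 - η) / η := div_pos (by linarith) hη₀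
  have hcS : 0 < (1 - η * (1 + θ)) / (η * (1 + θ)) := div_pos (by linarith) hα₀
  obtain ⟨q, hq, hlim⟩ := (hR'.comp hS' hcR.le hcS ⟨p, hp, hpS⟩).exists_tendsto_isFixedPt
    (by positivity) (hR.continuous.comp hS.continuous) ⟨p, show R (S p) = p by rw [hpS.eq, hp]⟩
    (x := fun k => ω (2 * k)) fun k => by simp only [comp_apply, S, mul_add, heven, hodd]
  exact ⟨q, (hR'.isFixedPt_of_comp hS' hcR.le hcS hp hpS hq).2, hlim⟩
end

section
/- Let P be symmetric positive definite on ℝⁿ with smallest eigenvalue δ > 0, and let T : ℝⁿ → ℝⁿ be γ-cocoercive (w.r.t. the standard inner product). Then P⁻¹ ∘ T is γδ-cocoercive with respect to the P-inner product ⟨x,y⟩_P = xᵀ P y. -/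
open scoped RealInnerProductSpace

/-- If `P` is symmetric positive definite with smallest eigenvalue (at least) `δ > 0`
(encoded as `⟪P x, x⟫ ≥ δ‖x‖²`) and `T` is `γ`-cocoercive for the standard inner
product, then `P⁻¹ ∘ T` is `γδ`-cocoercive with respect to the `P`-inner product
`⟨x, y⟩_P = xᵀ P y` (whose squared norm is `⟨z, z⟩_P`). -/
theorem preconditioned_cocoercive {n : ℕ}
    (P : EuclideanSpace ℝ (Fin n) ≃ₗ[ℝ] EuclideanSpace ℝ (Fin n))
    (δ γ : ℝ) (hδ : 0 < δ) (hγ : 0 < γ)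
    (hsymm : ∀ x y, ⟪P x, y⟫ = ⟪x, P y⟫)
    (hlb : ∀ x, ⟪P x, x⟫ ≥ δ * ‖x‖ ^ 2)
    (T : EuclideanSpace ℝ (Fin n) → EuclideanSpace ℝ (Fin n))
    (hcoco : ∀ x y, ⟪T x - T y, x - y⟫ ≥ γ * ‖T x - T y‖ ^ 2) :
    ∀ x y, ⟪P (P.symm (T x) - P.symm (T y)), x - y⟫ ≥
      γ * δ * ⟪P (P.symm (T x) - P.symm (T y)), P.symm (T x) - P.symm (T y)⟫ := by
  intro x y
  set s : EuclideanSpace ℝ (Fin n) := P.symm (T x) - P.symm (T y) with hs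
  have hPs : P s = T x - T y := by
    simp [hs, map_sub]
  rw [hPs]
  set u : EuclideanSpace ℝ (Fin n) := T x - T y with hu
  have h1 : ⟪u, x - y⟫ ≥ γ * ‖u‖ ^ 2 := hcoco x y
  -- it suffices that δ * ⟪u, s⟫ ≤ ‖u‖ ^ 2
  have key : δ * ⟪u, s⟫ ≤ ‖u‖ ^ 2 := by
    have ha : ⟪u, s⟫ ≥ δ * ‖s‖ ^ 2 := by
      have := hlb s
      rwa [hPs] at this
    have ha0 : 0 ≤ ⟪u, s⟫ := le_trans (by positivity) ha
    have hcs : ⟪u, s⟫ ≤ ‖u‖ * ‖s‖ := real_inner_le_norm u s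
    by_cases hz : u = 0
    · simp [hz]
    · have hun : 0 < ‖u‖ := norm_pos_iff.mpr hz
      nlinarith [sq_nonneg (‖u‖ - δ * ‖s‖), sq_nonneg ‖s‖]
  nlinarith
end

section
/- Let Φ be the block matrix Φ = [[ᾱ⁻¹, −Aᵀ],[−A, Nβ⁻¹ I]] where ᾱ = diag(α₁ I_n, …, α_N I_n), A = [A₁ | ⋯ | A_N] ∈ ℝ^{m×nN}, and δ > 0. If 0 < α_i ≤ (‖A_i‖ + δ)⁻¹ for each i and 0 < β ≤ ((1/N)∑ᵢ‖A_i‖ + δ/N)⁻¹, then Φ ⪰ δ I, i.e., every eigenvalue of Φ is at least δ. -/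
open scoped RealInnerProductSpace

/-- Quadratic-form version of `Φ ⪰ δI` for the preconditioning matrix
`Φ = [[ᾱ⁻¹, −Aᵀ],[−A, Nβ⁻¹ I]]`: under the step-size bounds
`0 < αᵢ ≤ (‖Aᵢ‖+δ)⁻¹` and `0 < β ≤ ((1/N)∑ᵢ‖Aᵢ‖ + δ/N)⁻¹`, one has
`xᵀΦx ≥ δ‖x‖²` for every `x = (u, λ)`. -/
theorem preconditioning_matrix_positive_definite {n m N : ℕ} (hN : 0 < N)
    (δ : ℝ) (hδ : 0 < δ)
    (A : Fin N → (EuclideanSpace ℝ (Fin n) →L[ℝ] EuclideanSpace ℝ (Fin m)))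
    (α : Fin N → ℝ) (β : ℝ)
    (hα : ∀ i, 0 < α i ∧ α i ≤ (‖A i‖ + δ)⁻¹)
    (hβ : 0 < β ∧ β ≤ ((1 / (N : ℝ)) * ∑ i, ‖A i‖ + δ / (N : ℝ))⁻¹) :
    ∀ (u : Fin N → EuclideanSpace ℝ (Fin n)) (lam : EuclideanSpace ℝ (Fin m)),
      (∑ i, (α i)⁻¹ * ‖u i‖ ^ 2) - 2 * (∑ i, ⟪A i (u i), lam⟫)
          + ((N : ℝ) * β⁻¹) * ‖lam‖ ^ 2
        ≥ δ * ((∑ i, ‖u i‖ ^ 2) + ‖lam‖ ^ 2) := by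
  intro u lam
  have hNpos : (0:ℝ) < (N:ℝ) := by exact_mod_cast hN
  -- αᵢ⁻¹ ≥ ‖Aᵢ‖ + δ
  have h1 : ∀ i, ‖A i‖ + δ ≤ (α i)⁻¹ := by
    intro i
    obtain ⟨hpos, hle⟩ := hα i
    have hc : 0 < ‖A i‖ + δ := by positivity
    exact (le_inv_comm₀ hpos hc).mp hle
  -- N β⁻¹ ≥ ∑ ‖Aᵢ‖ + δ
  have h2 : (∑ i, ‖A i‖) + δ ≤ (N:ℝ) * β⁻¹ := by
    obtain ⟨hbpos, hble⟩ := hβ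
    have hS : 0 < (1 / (N : ℝ)) * ∑ i, ‖A i‖ + δ / (N : ℝ) := by
      have : 0 ≤ ∑ i, ‖A i‖ := Finset.sum_nonneg (fun i _ => norm_nonneg _)
      positivity
    have hbi : (1 / (N : ℝ)) * ∑ i, ‖A i‖ + δ / (N : ℝ) ≤ β⁻¹ :=
      (le_inv_comm₀ hbpos hS).mp hble
    have := mul_le_mul_of_nonneg_left hbi (le_of_lt hNpos)
    have heq : (N:ℝ) * ((1 / (N : ℝ)) * ∑ i, ‖A i‖ + δ / (N : ℝ))
        = (∑ i, ‖A i‖) + δ := by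
      field_simp
    linarith [heq ▸ this]
  -- termwise bound
  have key : ∀ i ∈ Finset.univ, δ * ‖u i‖^2 - ‖A i‖ * ‖lam‖^2
      ≤ (α i)⁻¹ * ‖u i‖^2 - 2 * ⟪A i (u i), lam⟫ := by
    intro i _
    have hb : |⟪A i (u i), lam⟫| ≤ ‖A i‖ * ‖u i‖ * ‖lam‖ := by
      calc |⟪A i (u i), lam⟫| ≤ ‖A i (u i)‖ * ‖lam‖ := abs_real_inner_le_norm _ _
        _ ≤ ‖A i‖ * ‖u i‖ * ‖lam‖ :=
          mul_le_mul_of_nonneg_right ((A i).le_opNorm _) (norm_nonneg _)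
    have hb' : ⟪A i (u i), lam⟫ ≤ ‖A i‖ * ‖u i‖ * ‖lam‖ := (abs_le.mp hb).2
    have hA : (0:ℝ) ≤ ‖A i‖ := norm_nonneg _
    have hu : (0:ℝ) ≤ ‖u i‖ := norm_nonneg _
    have hl : (0:ℝ) ≤ ‖lam‖ := norm_nonneg _
    have h1i := h1 i
    nlinarith [sq_nonneg (‖u i‖ - ‖lam‖), mul_nonneg hA (sq_nonneg (‖u i‖ - ‖lam‖)),
      mul_le_mul_of_nonneg_right h1i (sq_nonneg ‖u i‖)]
  have hsum := Finset.sum_le_sum key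
  rw [Finset.sum_sub_distrib, Finset.sum_sub_distrib, ← Finset.mul_sum,
    ← Finset.sum_mul, ← Finset.mul_sum] at hsum
  have hl2 : (0:ℝ) ≤ ‖lam‖^2 := sq_nonneg _
  have h2' := mul_le_mul_of_nonneg_right h2 hl2
  nlinarith [hsum, h2']
end

section
/- Consider an aggregative game with cost functions J_i(x_i, x_{−i}) = g_i(x_i) + (C·avg(x))ᵀ x_i where C = Cᵀ and avg(x) = (1/N)∑ᵢ x_i, with each g_i convex. Then the game is potential: the function φ(x) = ∑ᵢ g_i(x_i) + (1/(2N)) xᵀ((I_N + 𝟙𝟙ᵀ) ⊗ C) x satisfies ∂φ = P, where P(x) = ∏ᵢ ∂_{x_i} J_i(x_i, x_{−i}) is the pseudo-subdifferential. -/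
/-!
Freezing every block but `xᵢ = t` and writing `a = ∑_{j ≠ i} xⱼ`, the potential is, up to
constants, `gᵢ t + (1/(2N)) (⟪C t, t⟫ + ⟪C (t + a), t + a⟫)` and the cost `Jᵢ` is
`gᵢ t + ⟪C ((1/N) (t + a)), t⟫`. For symmetric `C` the gradient of `t ↦ ⟪C (c (t + a)), t⟫` is
`C (c (t + a)) + c C t`, so both gradients equal `∇gᵢ(xᵢ) + C avg(x) + (1/N) C xᵢ`.
-/

open scoped RealInnerProductSpace

open Finset InnerProductSpace

theorem Fintype.sum_apply_update {ι M : Type*} {β : ι → Type*} [Fintype ι] [DecidableEq ι]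
    [AddCommMonoid M] (f : ∀ j, β j → M) (x : ∀ j, β j) (i : ι) (t : β i) :
    ∑ j, f j (Function.update x i t j) = f i t + ∑ j ∈ univ \ {i}, f j (x j) := by
  simp_rw [Function.apply_update f, sum_update_of_mem (mem_univ i)]

section Gradient

variable {E : Type*} [NormedAddCommGroup E] [InnerProductSpace ℝ E] [CompleteSpace E]
  {f g : E → ℝ} {f' g' x x' : E}

theorem HasGradientAt.add (hf : HasGradientAt f f' x) (hg : HasGradientAt g g' x) :
    HasGradientAt (fun y => f y + g y) (f' + g') x := by
  rw [hasGradientAt_iff_hasFDerivAt, map_add]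
  exact hf.hasFDerivAt.add hg.hasFDerivAt

theorem HasGradientAt.add_const (hf : HasGradientAt f f' x) (c : ℝ) :
    HasGradientAt (fun y => f y + c) f' x :=
  hf.hasFDerivAt.add_const c

theorem HasGradientAt.const_mul (hf : HasGradientAt f f' x) (c : ℝ) :
    HasGradientAt (fun y => c * f y) (c • f') x := by
  rw [hasGradientAt_iff_hasFDerivAt, map_smul]
  exact hf.hasFDerivAt.const_mul c

theorem HasGradientAt.comp_add_const (hf : HasGradientAt f f' (x + x')) :
    HasGradientAt (fun y => f (y + x')) f' x :=
  (hasFDerivAt_comp_add_right x').2 hf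

theorem HasFDerivAt.hasGradientAt_of_apply_eq_inner {L : E →L[ℝ] ℝ}
    (hf : HasFDerivAt f L x) (hL : ∀ v, L v = ⟪f', v⟫) : HasGradientAt f f' x := by
  rwa [hasGradientAt_iff_hasFDerivAt, show toDual ℝ E f' = L from
    ContinuousLinearMap.ext fun v => (hL v).symm]

variable {C : E →L[ℝ] E}

theorem hasGradientAt_inner_apply_smul_add
    (hC : C.toLinearMap.IsSymmetric) (c : ℝ) (a : E) :
    HasGradientAt (fun t => ⟪C (c • (t + a)), t⟫) (C (c • (x + a)) + c • C x) x := by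
  have hL : HasFDerivAt (fun t => C (c • (t + a))) (c • C) x := by
    convert (C.hasFDerivAt.add_const (C a)).const_smul c using 1
    ext t
    simp only [map_smul, map_add, Pi.smul_apply]
  refine (hL.inner ℝ (hasFDerivAt_id x)).hasGradientAt_of_apply_eq_inner fun v => ?_
  have hCvx : ⟪C v, x⟫ = ⟪C x, v⟫ := by rw [real_inner_comm]; exact (hC x v).symm
  simp only [ContinuousLinearMap.comp_apply, ContinuousLinearMap.prod_apply, fderivInnerCLM_apply,
    smul_apply, ContinuousLinearMap.id_apply, id]
  rw [inner_add_left, real_inner_smul_left, real_inner_smul_left, hCvx]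

theorem hasGradientAt_inner_apply_self (hC : C.toLinearMap.IsSymmetric) :
    HasGradientAt (fun t => ⟪C t, t⟫) ((2 : ℝ) • C x) x := by
  convert hasGradientAt_inner_apply_smul_add hC 1 0 (x := x) using 1 <;> simp [two_smul]

end Gradient

theorem linear_coupling_potential_game_general {n N : ℕ}
    (C : EuclideanSpace ℝ (Fin n) →L[ℝ] EuclideanSpace ℝ (Fin n))
    (hCsymm : ∀ u v, ⟪C u, v⟫ = ⟪u, C v⟫)
    (g : Fin N → EuclideanSpace ℝ (Fin n) → ℝ)
    (G : Fin N → EuclideanSpace ℝ (Fin n) → EuclideanSpace ℝ (Fin n))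
    (hg : ∀ i y, HasGradientAt (g i) (G i y) y) :
    ∀ (x : Fin N → EuclideanSpace ℝ (Fin n)) (i : Fin N),
      HasGradientAt
        (fun t => (∑ j, g j (Function.update x i t j)) +
          (1 / (2 * (N : ℝ))) *
            ((∑ j, ⟪C (Function.update x i t j), Function.update x i t j⟫) +
              ⟪C (∑ j, Function.update x i t j), ∑ j, Function.update x i t j⟫))
        (G i (x i) + C ((N : ℝ)⁻¹ • ∑ j, x j) + (N : ℝ)⁻¹ • C (x i)) (x i)
      ∧
      HasGradientAt
        (fun t => g i t + ⟪C ((N : ℝ)⁻¹ • ∑ j, Function.update x i t j), t⟫)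
        (G i (x i) + C ((N : ℝ)⁻¹ • ∑ j, x j) + (N : ℝ)⁻¹ • C (x i)) (x i) := by
  intro x i
  set a := ∑ j ∈ univ \ {i}, x j
  have hupdate t : ∑ j, Function.update x i t j = t + a :=
    Fintype.sum_apply_update (fun _ => id) x i t
  have hsum : ∑ j, x j = x i + a := by
    simpa using hupdate (x i)
  have hC : C.toLinearMap.IsSymmetric := hCsymm
  simp only [Fintype.sum_apply_update g, Fintype.sum_apply_update (fun _ y => ⟪C y, y⟫), hupdate,
    hsum]
  constructor
  · have hquad := (hasGradientAt_inner_apply_self hC (x := x i)).add_const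
      (∑ j ∈ univ \ {i}, ⟪C (x j), x j⟫) |>.add
      ((hasGradientAt_inner_apply_self hC).comp_add_const (x' := a))
    convert ((hg i (x i)).add_const _).add (hquad.const_mul (1 / (2 * (N : ℝ)))) using 1
    rw [map_smul, map_add, smul_add, smul_add, smul_smul, smul_smul]
    module
  · rw [add_assoc]
    exact (hg i (x i)).add (hasGradientAt_inner_apply_smul_add hC (N : ℝ)⁻¹ a)

/-- Aggregative games with linearly coupled costs
`J_i(x) = g_i(x_i) + (C·avg(x))ᵀ x_i`, `C = Cᵀ`, are potential: with
`φ(x) = ∑ᵢ g_i(x_i) + (1/(2N))(∑ᵢ⟪C xᵢ, xᵢ⟫ + ⟪C ∑ᵢxᵢ, ∑ᵢxᵢ⟫)`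
(the quadratic part being `(1/(2N)) xᵀ((I_N + 𝟙𝟙ᵀ)⊗C)x`), the partial gradient of `φ`
in `x_i` equals the partial gradient `∇_{x_i} J_i(x)`, and both equal
`∇g_i(x_i) + C·avg(x) + (1/N)·C x_i`. -/
theorem linear_coupling_potential_game {n N : ℕ} (hN : 0 < N)
    (C : EuclideanSpace ℝ (Fin n) →L[ℝ] EuclideanSpace ℝ (Fin n))
    (hCsymm : ∀ u v, ⟪C u, v⟫ = ⟪u, C v⟫)
    (g : Fin N → EuclideanSpace ℝ (Fin n) → ℝ)
    (hgconv : ∀ i, ConvexOn ℝ Set.univ (g i))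
    (G : Fin N → EuclideanSpace ℝ (Fin n) → EuclideanSpace ℝ (Fin n))
    (hg : ∀ i y, HasGradientAt (g i) (G i y) y) :
    ∀ (x : Fin N → EuclideanSpace ℝ (Fin n)) (i : Fin N),
      HasGradientAt
        (fun t => (∑ j, g j (Function.update x i t j)) +
          (1 / (2 * (N : ℝ))) *
            ((∑ j, ⟪C (Function.update x i t j), Function.update x i t j⟫) +
              ⟪C (∑ j, Function.update x i t j), ∑ j, Function.update x i t j⟫))
        (G i (x i) + C ((N : ℝ)⁻¹ • ∑ j, x j) + (N : ℝ)⁻¹ • C (x i)) (x i)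
      ∧
      HasGradientAt
        (fun t => g i t + ⟪C ((N : ℝ)⁻¹ • ∑ j, Function.update x i t j), t⟫)
        (G i (x i) + C ((N : ℝ)⁻¹ • ∑ j, x j) + (N : ℝ)⁻¹ • C (x i)) (x i) :=
  linear_coupling_potential_game_general C hCsymm g G hg
end
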